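/- Let C and D be model categories and G : C → D a right Quillen functor (G has a left adjoint and preserves fibrations and trivial fibrations). Then G admits a right derived functor RG : Ho(C) → Ho(D): there is a functor RG together with a natural transformation η : λ_D ∘ G → RG ∘ λ_C (where λ_C : C → Ho(C) and λ_D : D → Ho(D) are the localization functors) through which every natural transformation λ_D ∘ G → H ∘ λ_C factors essentially uniquely. Moreover, for every object A of C and every weak equivalence A → Â with Â fibrant, RG(A) is isomorphic in Ho(D) to G(Â). -/

import Mathlib

/-!
STATEMENT 2: a right Quillen functor admits a (total) right derived functor,
computed via fibrant replacement (Quillen).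
-/

open CategoryTheory CategoryTheory.Limits

universe v v' u u'

/-- A morphism property is closed under retracts. -/
def CategoryTheory.MorphismProperty.IsRetractClosed {C : Type u} [Category.{v} C]
    (P : MorphismProperty C) : Prop :=
  ∀ ⦃X Y X' Y' : C⦄ (f : X ⟶ Y) (g : X' ⟶ Y') (i : X ⟶ X') (r : X' ⟶ X)
    (i' : Y ⟶ Y') (r' : Y' ⟶ Y),
      i ≫ r = 𝟙 X → i' ≫ r' = 𝟙 Y → i ≫ g = f ≫ i' → g ≫ r' = r ≫ f → P g → P f

/-- A model structure on a category `C`, following Quillen's axioms (as in Mathlib's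
`ModelCategory` class). -/
structure ModelStructure (C : Type u) [Category.{v} C] where
  weq : MorphismProperty C
  fib : MorphismProperty C
  cof : MorphismProperty C
  cm1a : HasFiniteLimits C
  cm1b : HasFiniteColimits C
  cm2 : weq.HasTwoOutOfThreeProperty
  cm3a : weq.IsRetractClosed
  cm3b : fib.IsRetractClosed
  cm3c : cof.IsRetractClosed
  cm4a : ∀ ⦃A B X Y : C⦄ (i : A ⟶ B) (p : X ⟶ Y),
      cof i → weq i → fib p → HasLiftingProperty i p
  cm4b : ∀ ⦃A B X Y : C⦄ (i : A ⟶ B) (p : X ⟶ Y),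
      cof i → fib p → weq p → HasLiftingProperty i p
  cm5a : MorphismProperty.HasFactorization
      (fun _ _ f => weq f ∧ cof f : MorphismProperty C) fib
  cm5b : MorphismProperty.HasFactorization
      cof (fun _ _ f => weq f ∧ fib f : MorphismProperty C)

/-!
A model structure as above is a Mathlib `ModelCategory`, in which the inclusion of the fibrant
objects is a right derivability structure (Kahn–Maltsiniotis). Hence any functor inverting the
weak equivalences between fibrant objects has a right derived functor whose unit is invertible
at fibrant objects. For `G ⋙ λ_D` this follows from Ken Brown's lemma, because `G` sends trivial
fibrations to weak equivalences: a weak equivalence between fibrant objects factors as a section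
of a trivial fibration followed by a trivial fibration.
-/

open HomotopicalAlgebra

namespace CategoryTheory.MorphismProperty

variable {C : Type u} [Category.{v} C]

lemma IsRetractClosed.isStableUnderRetracts {P : MorphismProperty C} (hP : P.IsRetractClosed) :
    P.IsStableUnderRetracts :=
  ⟨fun {_ _ _ _ f g} h hg => hP f g h.i.left h.r.left h.i.right h.r.right
    (by simp) (by simp) h.i.w h.r.w.symm hg⟩

lemma HasFactorization.of_le {W₁ W₂ W₁' W₂' : MorphismProperty C} (h : HasFactorization W₁ W₂)
    (h₁ : W₁ ≤ W₁') (h₂ : W₂ ≤ W₂') : HasFactorization W₁' W₂' :=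
  ⟨fun f => h.nonempty_mapFactorizationData f |>.map fun d =>
    { d with hi := h₁ _ d.hi, hp := h₂ _ d.hp }⟩

end CategoryTheory.MorphismProperty

abbrev ModelStructure.toModelCategory {C : Type u} [Category.{v} C] (M : ModelStructure C) :
    ModelCategory C where
  categoryWithFibrations := ⟨M.fib⟩
  categoryWithCofibrations := ⟨M.cof⟩
  categoryWithWeakEquivalences := ⟨M.weq⟩
  cm1a := M.cm1a
  cm1b := M.cm1b
  cm2 := M.cm2
  cm3a := M.cm3a.isStableUnderRetracts
  cm3b := M.cm3b.isStableUnderRetracts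
  cm3c := M.cm3c.isStableUnderRetracts
  cm4a i p hi hi' hp := M.cm4a i p hi.mem hi'.mem hp.mem
  cm4b i p hi hp hp' := M.cm4b i p hi.mem hp.mem hp'.mem
  cm5a := M.cm5a.of_le (fun _ _ _ => And.symm) le_rfl
  cm5b := M.cm5b.of_le le_rfl (fun _ _ _ => And.symm)

namespace HomotopicalAlgebra

variable {C : Type*} [Category* C] [ModelCategory C] {H : Type*} [Category* H]
  {F : C ⥤ H}

lemma isIso_map_of_weakEquivalence_of_isFibrant (hF : (trivialFibrations C).IsInvertedBy F)
    {X Y : C} (f : X ⟶ Y) [IsFibrant X] [IsFibrant Y] [WeakEquivalence f] :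
    IsIso (F.map f) := by
  let h : FibrantBrownFactorization f := Classical.arbitrary _
  have : IsIso (F.map h.p) := hF _ (mem_trivialFibrations h.p)
  have : IsIso (F.map h.r) := hF _ (mem_trivialFibrations h.r)
  have : IsIso (F.map h.i ≫ F.map h.r) := by
    rw [← F.map_comp, h.i_r, F.map_id]
    infer_instance
  have : IsIso (F.map h.i) := IsIso.of_isIso_comp_right _ (F.map h.r)
  rw [← h.fac, F.map_comp]
  infer_instance

lemma derives_of_isInvertedBy_trivialFibrations (hF : (trivialFibrations C).IsInvertedBy F) :
    (FibrantObject.localizerMorphism C).Derives F := fun _ _ f hf =>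
  have : WeakEquivalence f := ⟨hf⟩
  isIso_map_of_weakEquivalence_of_isFibrant hF f.hom

lemma hasRightDerivedFunctor_of_isInvertedBy_trivialFibrations
    (hF : (trivialFibrations C).IsInvertedBy F) :
    F.HasRightDerivedFunctor (weakEquivalences C) :=
  have := (derives_of_isInvertedBy_trivialFibrations hF).hasPointwiseRightDerivedFunctor
  inferInstance

variable {D : Type*} [Category* D] {L : C ⥤ D} [L.IsLocalization (weakEquivalences C)]
  {RF : D ⥤ H} (α : F ⟶ L ⋙ RF) [RF.IsRightDerivedFunctor α (weakEquivalences C)]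

lemma isIso_app_of_isFibrant_of_isRightDerivedFunctor
    (hF : (trivialFibrations C).IsInvertedBy F) (X : C) [IsFibrant X] : IsIso (α.app X) :=
  (derives_of_isInvertedBy_trivialFibrations hF).isIso_of_isRightDerivedFunctor α
    (FibrantObject.mk X)

noncomputable def rightDerivedObjIsoOfFibrantReplacement
    (hF : (trivialFibrations C).IsInvertedBy F) {A Afib : C} (i : A ⟶ Afib)
    [WeakEquivalence i] [IsFibrant Afib] : RF.obj (L.obj A) ≅ F.obj Afib :=
  have := isIso_app_of_isFibrant_of_isRightDerivedFunctor α hF Afib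
  RF.mapIso (Localization.isoOfHom L (weakEquivalences C) i (mem_weakEquivalences i)) ≪≫
    (asIso (α.app Afib)).symm

end HomotopicalAlgebra

theorem rightQuillen_hasRightDerivedFunctor_general
    {C : Type u} [Category.{v} C] {D : Type u'} [Category.{v'} D]
    (MC : ModelStructure C) (MD : ModelStructure D) [HasTerminal C]
    (G : C ⥤ D)
    (hGtrivfib : ∀ ⦃X Y : C⦄ (p : X ⟶ Y), MC.fib p → MC.weq p →
        MD.fib (G.map p) ∧ MD.weq (G.map p)) :
    ∃ (RG : MC.weq.Localization ⥤ MD.weq.Localization)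
      (η : G ⋙ MD.weq.Q ⟶ MC.weq.Q ⋙ RG),
        RG.IsLeftKanExtension η ∧
        ∀ (A Afib : C) (i : A ⟶ Afib), MC.weq i → MC.fib (terminal.from Afib) →
          Nonempty (RG.obj (MC.weq.Q.obj A) ≅ MD.weq.Q.obj (G.obj Afib)) := by
  let := MC.toModelCategory
  have hF : (trivialFibrations C).IsInvertedBy (G ⋙ MD.weq.Q) := fun _ _ p ⟨hp, hw⟩ =>
    Localization.inverts MD.weq.Q MD.weq _ (hGtrivfib p hp hw).2
  have : MC.weq.Q.IsLocalization (weakEquivalences C) :=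
    inferInstanceAs (MC.weq.Q.IsLocalization MC.weq)
  have := hasRightDerivedFunctor_of_isInvertedBy_trivialFibrations hF
  let η := (G ⋙ MD.weq.Q).totalRightDerivedUnit MC.weq.Q (weakEquivalences C)
  refine ⟨_, η, Functor.IsRightDerivedFunctor.isLeftKanExtension _ _ (weakEquivalences C),
    fun A Afib i hi hfib => ?_⟩
  have : WeakEquivalence i := ⟨hi⟩
  have : IsFibrant Afib := ⟨hfib⟩
  exact ⟨rightDerivedObjIsoOfFibrantReplacement η hF i⟩

/-- **Quillen.** Let `C`, `D` be model categories and `G : C ⥤ D` a right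
Quillen functor: `G` has a left adjoint `F` and preserves fibrations and trivial
fibrations. Then `G` admits a right derived functor `RG : Ho(C) ⥤ Ho(D)`: there is a
functor `RG` together with a natural transformation `η : λ_D ∘ G ⟶ RG ∘ λ_C` (where
`λ_C`, `λ_D` are the localization functors at the weak equivalences) which is universal,
i.e. exhibits `RG` as a left Kan extension of `λ_D ∘ G` along `λ_C` (so that every
natural transformation `λ_D ∘ G ⟶ H ∘ λ_C` factors essentially uniquely through `η`).
Moreover, for every object `A` of `C` and every weak equivalence `A ⟶ Afib` with `Afib`
fibrant, `RG(A)` is isomorphic in `Ho(D)` to `G(Afib)`. -/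
theorem rightQuillen_hasRightDerivedFunctor
    {C : Type u} [Category.{v} C] {D : Type u'} [Category.{v'} D]
    (MC : ModelStructure C) (MD : ModelStructure D) [HasTerminal C]
    (G : C ⥤ D) (F : D ⥤ C) (adj : F ⊣ G)
    (hGfib : ∀ ⦃X Y : C⦄ (p : X ⟶ Y), MC.fib p → MD.fib (G.map p))
    (hGtrivfib : ∀ ⦃X Y : C⦄ (p : X ⟶ Y), MC.fib p → MC.weq p →
        MD.fib (G.map p) ∧ MD.weq (G.map p)) :
    ∃ (RG : MC.weq.Localization ⥤ MD.weq.Localization)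
      (η : G ⋙ MD.weq.Q ⟶ MC.weq.Q ⋙ RG),
        RG.IsLeftKanExtension η ∧
        ∀ (A Afib : C) (i : A ⟶ Afib), MC.weq i → MC.fib (terminal.from Afib) →
          Nonempty (RG.obj (MC.weq.Q.obj A) ≅ MD.weq.Q.obj (G.obj Afib)) :=
  rightQuillen_hasRightDerivedFunctor_general MC MD G hGtrivfib
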